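/- Under the hypotheses of the preceding ODE system (m' = -(1/2)m² + (1/2)α² + f with |f| ≤ c₁, α' = -mα, α(0) ≠ 0 with |α(0)| ≥ β > 0), the a-priori bound |m(t)| ≤ (w(0)/(2β)) e^{(c₁ + 1/2)t} holds for all t ∈ [0,T), where w(t) = α(0)α(t) + (α(0)/α(t))(1 + m(t)²). In particular m stays bounded on any finite time interval. -/

import Mathlib

/-!
Along the flow the Lyapunov function `w = α(0)α + (α(0)/α)(1 + m²)` satisfies
`w' = (α(0)/α) m (2f + 1)`. Since `α` keeps its sign, both terms of `w` are positive, and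
`2|m| ≤ 1 + m²` gives `|w'| ≤ (c₁ + ½) w`; Grönwall yields `w(t) ≤ w(0) e^{(c₁+½)t}`.
On the other hand AM–GM gives `w ≥ 2√(α(0)²(1 + m²)) ≥ 2β|m|`.
-/

open Set Real

theorem IsPreconnected.mul_pos_of_ne_zero {X : Type*} [TopologicalSpace X] {s : Set X}
    {g : X → ℝ} (hs : IsPreconnected s) (hg : ContinuousOn g s) (hg0 : ∀ x ∈ s, g x ≠ 0)
    {a x : X} (ha : a ∈ s) (hx : x ∈ s) : 0 < g a * g x :=
  hs.lt_of_ne (continuousOn_const.mul hg) (fun y hy => mul_ne_zero (hg0 a ha) (hg0 y hy))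
    ⟨a, ha, mul_self_pos.2 (hg0 a ha)⟩ hx

theorem norm_le_mul_exp_of_norm_deriv_le {E : Type*} [NormedAddCommGroup E] [NormedSpace ℝ E]
    {f f' : ℝ → E} {K a b : ℝ} (hf : ∀ x ∈ Ico a b, HasDerivAt f (f' x) x)
    (bound : ∀ x ∈ Ico a b, ‖f' x‖ ≤ K * ‖f x‖) (t : ℝ) (ht : t ∈ Ico a b) :
    ‖f t‖ ≤ ‖f a‖ * exp (K * (t - a)) := by
  have hsub : Icc a t ⊆ Ico a b := Icc_subset_Ico_right ht.2
  have key := norm_le_gronwallBound_of_norm_deriv_right_le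
    (fun x hx => (hf x (hsub hx)).continuousAt.continuousWithinAt)
    (fun x hx => (hf x (hsub (Ico_subset_Icc_self hx))).hasDerivWithinAt) le_rfl
    (fun x hx => (add_zero (K * ‖f x‖)).symm ▸ bound x (hsub (Ico_subset_Icc_self hx)))
    t ⟨ht.1, le_rfl⟩
  rwa [gronwallBound_ε0] at key

theorem div_pos_of_mul_pos {a b : ℝ} (h : 0 < a * b) : 0 < a / b :=
  div_pos_iff.2 (mul_pos_iff.1 h)

theorem two_mul_abs_le_add_mul_sq {p q β x : ℝ} (hq : 0 < q) (hpq : β ^ 2 ≤ p * q) :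
    2 * β * |x| ≤ p + q * x ^ 2 := by
  rw [← sq_abs x]
  have h : 0 ≤ q * (p + q * |x| ^ 2 - 2 * β * |x|) := by nlinarith [sq_nonneg (q * |x| - β)]
  linarith [(mul_nonneg_iff_of_pos_left hq).1 h]

noncomputable def lyapunov (m α : ℝ → ℝ) (t : ℝ) : ℝ :=
  α 0 * α t + α 0 / α t * (1 + m t ^ 2)

section lyapunov

variable {m α : ℝ → ℝ} {t : ℝ}

theorem lyapunov_pos (h : 0 < α 0 * α t) : 0 < lyapunov m α t := by
  have := div_pos_of_mul_pos h
  unfold lyapunov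
  positivity

theorem two_mul_abs_le_lyapunov {β : ℝ} (hβ : 0 ≤ β) (hα0 : β ≤ |α 0|) (h : 0 < α 0 * α t) :
    2 * β * |m t| ≤ lyapunov m α t := by
  have hq : 0 < α 0 / α t := div_pos_of_mul_pos h
  have hpq : β ^ 2 ≤ α 0 * α t * (α 0 / α t) := by
    have hαt : α t ≠ 0 := right_ne_zero_of_mul h.ne'
    rw [show α 0 * α t * (α 0 / α t) = |α 0| ^ 2 by field_simp; rw [sq_abs]]
    exact pow_le_pow_left₀ hβ hα0 2
  have := two_mul_abs_le_add_mul_sq (x := m t) hq hpq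
  unfold lyapunov
  linarith

theorem hasDerivAt_lyapunov {φ : ℝ} (hαt : α t ≠ 0)
    (hm : HasDerivAt m (-(1/2) * m t ^ 2 + (1/2) * α t ^ 2 + φ) t)
    (hα : HasDerivAt α (-(m t * α t)) t) :
    HasDerivAt (lyapunov m α) (α 0 / α t * m t * (2 * φ + 1)) t := by
  have := (hα.const_mul (α 0)).add
    (((hasDerivAt_const t (α 0)).div hα hαt).mul ((hasDerivAt_const t 1).add (hm.pow 2)))
  refine this.congr_deriv ?_
  simp only [Pi.add_apply, Pi.div_apply, Pi.pow_apply]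
  field_simp
  ring

theorem abs_deriv_lyapunov_le {φ c : ℝ} (hφ : |φ| ≤ c) (h : 0 < α 0 * α t) :
    |α 0 / α t * m t * (2 * φ + 1)| ≤ (c + 1/2) * lyapunov m α t := by
  have hq : 0 < α 0 / α t := div_pos_of_mul_pos h
  have hm : 2 * |m t| ≤ 1 + m t ^ 2 := by nlinarith [two_mul_le_add_sq |m t| 1, sq_abs (m t)]
  have hφ' : |2 * φ + 1| ≤ 2 * c + 1 := by
    rw [abs_le] at hφ ⊢; constructor <;> linarith
  have hc : 0 ≤ c + 1/2 := by linarith [abs_nonneg φ]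
  calc |α 0 / α t * m t * (2 * φ + 1)| = α 0 / α t * (2 * |m t| * |2 * φ + 1|) / 2 := by
        rw [abs_mul, abs_mul, abs_of_pos hq]; ring
    _ ≤ α 0 / α t * ((1 + m t ^ 2) * (2 * c + 1)) / 2 := by
        gcongr
    _ = (c + 1/2) * (α 0 / α t * (1 + m t ^ 2)) := by ring
    _ ≤ (c + 1/2) * lyapunov m α t := by
        unfold lyapunov; gcongr; linarith

end lyapunov

theorem apriori_bound_m_general (T c₁ β : ℝ) (hβ : 0 < β)
    (m α f : ℝ → ℝ)
    (hf : ∀ t ∈ Ico 0 T, |f t| ≤ c₁)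
    (hm : ∀ t ∈ Ico 0 T,
      HasDerivAt m (-(1/2) * (m t) ^ 2 + (1/2) * (α t) ^ 2 + f t) t)
    (hα : ∀ t ∈ Ico 0 T, HasDerivAt α (-(m t * α t)) t)
    (hαne : ∀ t ∈ Ico 0 T, α t ≠ 0)
    (hα0 : β ≤ |α 0|) :
    ∀ t ∈ Ico 0 T,
      |m t| ≤ (α 0 * α 0 + (α 0 / α 0) * (1 + m 0 ^ 2)) / (2 * β) *
        Real.exp ((c₁ + 1/2) * t) := by
  intro t ht
  have h0 : (0 : ℝ) ∈ Ico 0 T := ⟨le_rfl, ht.1.trans_lt ht.2⟩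
  have hsign : ∀ u ∈ Ico 0 T, 0 < α 0 * α u := fun u hu =>
    isPreconnected_Ico.mul_pos_of_ne_zero (fun x hx => (hα x hx).continuousAt.continuousWithinAt)
      hαne h0 hu
  have hgrowth := norm_le_mul_exp_of_norm_deriv_le
    (fun u hu => hasDerivAt_lyapunov (hαne u hu) (hm u hu) (hα u hu))
    (fun u hu => by
      simpa only [Real.norm_eq_abs, abs_of_pos (lyapunov_pos (m := m) (hsign u hu))]
        using abs_deriv_lyapunov_le (hf u hu) (hsign u hu)) t ht
  simp only [Real.norm_eq_abs, sub_zero, abs_of_pos (lyapunov_pos (hsign t ht)),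
    abs_of_pos (lyapunov_pos (hsign 0 h0))] at hgrowth
  rw [div_mul_eq_mul_div, le_div_iff₀ (by positivity), mul_comm]
  exact (two_mul_abs_le_lyapunov hβ.le hα0 (hsign t ht)).trans hgrowth

/-- A-priori bound on `m` from the Lyapunov function (Theorem 4.1): under
`m' = -½m² + ½α² + f`, `|f| ≤ c₁`, `α' = -mα`, `|α 0| ≥ β > 0`, one has
`|m(t)| ≤ (w(0)/(2β)) e^{(c₁+½)t}` with `w(t) = α(0)α(t) + (α(0)/α(t))(1 + m(t)²)`. -/
theorem apriori_bound_m (T c₁ β : ℝ) (hT : 0 < T) (hc₁ : 0 < c₁) (hβ : 0 < β)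
    (m α f : ℝ → ℝ)
    (hf : ∀ t ∈ Ico 0 T, |f t| ≤ c₁)
    (hm : ∀ t ∈ Ico 0 T,
      HasDerivAt m (-(1/2) * (m t) ^ 2 + (1/2) * (α t) ^ 2 + f t) t)
    (hα : ∀ t ∈ Ico 0 T, HasDerivAt α (-(m t * α t)) t)
    (hαne : ∀ t ∈ Ico 0 T, α t ≠ 0)
    (hα0 : β ≤ |α 0|) :
    ∀ t ∈ Ico 0 T,
      |m t| ≤ (α 0 * α 0 + (α 0 / α 0) * (1 + m 0 ^ 2)) / (2 * β) *
        Real.exp ((c₁ + 1/2) * t) :=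
  apriori_bound_m_general T c₁ β hβ m α f hf hm hα hαne hα0
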